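/- Suppose u_h, v_h, q_h ∈ V_h^k satisfy, for every cell I_j and every polynomial test function φ of degree at most k on I_j, the two auxiliary equations of the dissipative Scheme D1: (v_h, φ)_{I_j} − ⟨q_h⁻, φ⟩_{I_j} + (q_h, φ′)_{I_j} = ⟨u_h⁻, φ⟩_{I_j} − (u_h, φ′)_{I_j} and (q_h, φ)_{I_j} = ⟨v_h⁺, φ⟩_{I_j} − (v_h, φ′)_{I_j}, with periodic trace identification. Then the energy identity ∫_a^b v_h² dx + ∫_a^b q_h² dx + ∫_a^b q_h u_h dx = 0 holds. -/

import Mathlib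

open Polynomial Set

noncomputable section

namespace FW

variable {N : ℕ}

/-- Minus trace `ω⁻` at interface `j+1/2` (right end of cell `j`). -/
def trM (x : Fin (N + 1) → ℝ) (ω : Fin N → Polynomial ℝ) (j : Fin N) : ℝ :=
  (ω j).eval (x j.succ)

/-- Plus trace `ω⁺` at interface `j+1/2` (left end of the next cell, cyclically). -/
def trP [NeZero N] (x : Fin (N + 1) → ℝ) (ω : Fin N → Polynomial ℝ) (j : Fin N) : ℝ :=
  (ω (j + 1)).eval (x (j + 1).castSucc)

/-- Average trace `{ω}`. -/
def trA [NeZero N] (x : Fin (N + 1) → ℝ) (ω : Fin N → Polynomial ℝ) (j : Fin N) : ℝ :=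
  (trP x ω j + trM x ω j) / 2

/-- Jump `[ω]`. -/
def jmp [NeZero N] (x : Fin (N + 1) → ℝ) (ω : Fin N → Polynomial ℝ) (j : Fin N) : ℝ :=
  trP x ω j - trM x ω j

/-- Cell L² pairing `(u, φ)_{I_j}` of a piecewise polynomial with a test polynomial. -/
def ipj (x : Fin (N + 1) → ℝ) (u : Fin N → Polynomial ℝ) (j : Fin N) (φ : Polynomial ℝ) : ℝ :=
  ∫ t in (x j.castSucc)..(x j.succ), (u j).eval t * φ.eval t

/-- Cell pairing `(f∘u, φ)_{I_j}`. -/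
def ipfj (x : Fin (N + 1) → ℝ) (f : ℝ → ℝ) (u : Fin N → Polynomial ℝ) (j : Fin N)
    (φ : Polynomial ℝ) : ℝ :=
  ∫ t in (x j.castSucc)..(x j.succ), f ((u j).eval t) * φ.eval t

/-- Boundary pairing `⟨g, φ⟩_{I_j}` for interface values `g`. -/
def bdj [NeZero N] (x : Fin (N + 1) → ℝ) (g : Fin N → ℝ) (j : Fin N) (φ : Polynomial ℝ) : ℝ :=
  g j * φ.eval (x j.succ) - g (j - 1) * φ.eval (x j.castSucc)

/-- Membership in the space `V_h^k` of piecewise polynomials of degree at most `k`. -/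
def memV (k : ℕ) (ω : Fin N → Polynomial ℝ) : Prop :=
  ∀ j, (ω j).degree ≤ (k : WithBot ℕ)

/-- `L⁻(ω, φ)`. -/
def Lm [NeZero N] (x : Fin (N + 1) → ℝ) (ω φ : Fin N → Polynomial ℝ) : ℝ :=
  ∑ j, (-(ipj x ω j (derivative (φ j))) + bdj x (trM x ω) j (φ j))

/-- `L⁺(ω, φ)`. -/
def Lp [NeZero N] (x : Fin (N + 1) → ℝ) (ω φ : Fin N → Polynomial ℝ) : ℝ :=
  ∑ j, (-(ipj x ω j (derivative (φ j))) + bdj x (trP x ω) j (φ j))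

/-- `L^c(ω, φ)`. -/
def Lc [NeZero N] (x : Fin (N + 1) → ℝ) (ω φ : Fin N → Polynomial ℝ) : ℝ :=
  ∑ j, (-(ipj x ω j (derivative (φ j))) + bdj x (trA x ω) j (φ j))

/-- Godunov numerical flux. -/
def godunov (f : ℝ → ℝ) (c d : ℝ) : ℝ :=
  if c < d then sInf (f '' Set.Icc c d) else sSup (f '' Set.Icc d c)

/-- Conservative numerical flux for `f(u) = u^p/p`, `F(u) = u^(p+1)/(p(p+1))`. -/
def consFlux (p : ℕ) (c d : ℝ) : ℝ :=
  if c = d then c ^ p / (p : ℝ)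
  else (d ^ (p + 1) / ((p : ℝ) * ((p : ℝ) + 1)) - c ^ (p + 1) / ((p : ℝ) * ((p : ℝ) + 1))) / (d - c)

/-- Dissipative (Godunov-flux) nonlinear form `N^d`. -/
def Nd [NeZero N] (x : Fin (N + 1) → ℝ) (f : ℝ → ℝ) (ω φ : Fin N → Polynomial ℝ) : ℝ :=
  ∑ j, (-(ipfj x f ω j (derivative (φ j)))
    + bdj x (fun i => godunov f (trM x ω i) (trP x ω i)) j (φ j))

/-- Conservative-flux nonlinear form `N^c`. -/
def Nc [NeZero N] (x : Fin (N + 1) → ℝ) (p : ℕ) (ω φ : Fin N → Polynomial ℝ) : ℝ :=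
  ∑ j, (-(ipfj x (fun w => w ^ p / (p : ℝ)) ω j (derivative (φ j)))
    + bdj x (fun i => consFlux p (trM x ω i) (trP x ω i)) j (φ j))

end FW

/-!
Testing the first auxiliary equation with `v_h`, and the second with `q_h` and with `u_h`, expresses
`∫ v_h² + ∫ q_h² + ∫ q_h u_h` as `(L⁻(q_h, v_h) + L⁺(v_h, q_h)) + (L⁻(u_h, v_h) + L⁺(v_h, u_h))`.
Each bracket vanishes: on a cell, integration by parts turns `L⁻(ω, φ) + L⁺(φ, ω)` into the
difference of the products of traces `φ⁺ ω⁻` at the two ends, and these differences telescope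
around the periodic mesh.
-/

theorem Polynomial.intervalIntegral_eval_mul_derivative_add (P Q : ℝ[X]) (α β : ℝ) :
    (∫ t in α..β, P.eval t * (derivative Q).eval t)
      + ∫ t in α..β, Q.eval t * (derivative P).eval t
      = P.eval β * Q.eval β - P.eval α * Q.eval α := by
  have hQP : (∫ t in α..β, Q.eval t * (derivative P).eval t)
      = ∫ t in α..β, (derivative P).eval t * Q.eval t :=
    intervalIntegral.integral_congr fun t _ => mul_comm _ _
  rw [hQP, intervalIntegral.integral_mul_deriv_eq_deriv_mul (fun t _ => P.hasDerivAt t)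
    (fun t _ => Q.hasDerivAt t) ((derivative P).continuous.intervalIntegrable _ _)
    ((derivative Q).continuous.intervalIntegrable _ _)]
  ring

namespace FW

variable {N : ℕ} [NeZero N] (x : Fin (N + 1) → ℝ)

theorem trP_sub_one (ω : Fin N → ℝ[X]) (j : Fin N) :
    trP x ω (j - 1) = (ω j).eval (x j.castSucc) := by
  simp only [trP, sub_add_cancel]

theorem ipj_derivative_add_ipj_derivative (ω φ : Fin N → ℝ[X]) (j : Fin N) :
    ipj x ω j (derivative (φ j)) + ipj x φ j (derivative (ω j))
      = trM x ω j * trM x φ j - trP x ω (j - 1) * trP x φ (j - 1) := by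
  rw [trP_sub_one, trP_sub_one]
  exact (ω j).intervalIntegral_eval_mul_derivative_add (φ j) _ _

theorem Lm_add_Lp_swap (ω φ : Fin N → ℝ[X]) : Lm x ω φ + Lp x φ ω = 0 := by
  have hcell : ∀ j : Fin N,
      -ipj x ω j (derivative (φ j)) + bdj x (trM x ω) j (φ j)
        + (-ipj x φ j (derivative (ω j)) + bdj x (trP x φ) j (ω j))
      = trP x φ j * trM x ω j - trP x φ (j - 1) * trM x ω (j - 1) := by
    intro j
    have hibp := ipj_derivative_add_ipj_derivative x ω φ j
    simp only [bdj, ← trP_sub_one x]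
    simp only [trM] at hibp ⊢
    linear_combination -hibp
  have hshift : ∑ j : Fin N, trP x φ (j - 1) * trM x ω (j - 1)
      = ∑ j : Fin N, trP x φ j * trM x ω j :=
    Fintype.sum_equiv (Equiv.subRight 1) _ _ fun _ => rfl
  rw [Lm, Lp, ← Finset.sum_add_distrib, Finset.sum_congr rfl fun j _ => hcell j,
    Finset.sum_sub_distrib, hshift, sub_self]

end FW

theorem stmt12_general {N : ℕ} [NeZero N]
    (x : Fin (N + 1) → ℝ)
    (k : ℕ) (u v q : Fin N → Polynomial ℝ)
    (hu : FW.memV k u) (hv : FW.memV k v) (hq : FW.memV k q)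
    (heq2 : ∀ (j : Fin N), ∀ φ : Polynomial ℝ, φ.degree ≤ (k : WithBot ℕ) →
      FW.ipj x v j φ - FW.bdj x (FW.trM x q) j φ + FW.ipj x q j (Polynomial.derivative φ)
        = FW.bdj x (FW.trM x u) j φ - FW.ipj x u j (Polynomial.derivative φ))
    (heq3 : ∀ (j : Fin N), ∀ φ : Polynomial ℝ, φ.degree ≤ (k : WithBot ℕ) →
      FW.ipj x q j φ = FW.bdj x (FW.trP x v) j φ - FW.ipj x v j (Polynomial.derivative φ)) :
    (∑ j : Fin N, FW.ipj x v j (v j)) + (∑ j : Fin N, FW.ipj x q j (q j))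
      + (∑ j : Fin N, FW.ipj x q j (u j)) = 0 := by
  have hforms : (∑ j : Fin N, FW.ipj x v j (v j)) + (∑ j : Fin N, FW.ipj x q j (q j))
      + (∑ j : Fin N, FW.ipj x q j (u j))
      = (FW.Lm x q v + FW.Lp x v q) + (FW.Lm x u v + FW.Lp x v u) := by
    simp only [FW.Lm, FW.Lp, ← Finset.sum_add_distrib]
    refine Finset.sum_congr rfl fun j _ => ?_
    linarith [heq2 j (v j) (hv j), heq3 j (q j) (hq j), heq3 j (u j) (hu j)]
  rw [hforms, FW.Lm_add_Lp_swap, FW.Lm_add_Lp_swap, add_zero]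

theorem stmt12 {N : ℕ} [NeZero N] (hN : 1 ≤ N) (a b : ℝ) (hab : a < b)
    (x : Fin (N + 1) → ℝ) (hx : StrictMono x) (hxa : x 0 = a) (hxb : x (Fin.last N) = b)
    (k : ℕ) (u v q : Fin N → Polynomial ℝ)
    (hu : FW.memV k u) (hv : FW.memV k v) (hq : FW.memV k q)
    (heq2 : ∀ (j : Fin N), ∀ φ : Polynomial ℝ, φ.degree ≤ (k : WithBot ℕ) →
      FW.ipj x v j φ - FW.bdj x (FW.trM x q) j φ + FW.ipj x q j (Polynomial.derivative φ)
        = FW.bdj x (FW.trM x u) j φ - FW.ipj x u j (Polynomial.derivative φ))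
    (heq3 : ∀ (j : Fin N), ∀ φ : Polynomial ℝ, φ.degree ≤ (k : WithBot ℕ) →
      FW.ipj x q j φ = FW.bdj x (FW.trP x v) j φ - FW.ipj x v j (Polynomial.derivative φ)) :
    (∑ j : Fin N, FW.ipj x v j (v j)) + (∑ j : Fin N, FW.ipj x q j (q j))
      + (∑ j : Fin N, FW.ipj x q j (u j)) = 0 :=
  stmt12_general x k u v q hu hv hq heq2 heq3
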